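/- For the input sequence y_n = n, the output sequence W(n) equals the Catalan number C_{n+1} = (1/(n+2)) · C(2n+2, n+1); that is, the number of n-tuples (x_1,...,x_n) of non-negative integers with x_1 ≤ n and x_{j+1} ≤ min(x_j, n-j) for all j equals the (n+1)-st Catalan number. -/
import Mathlib


/-- `x : Fin n → ℕ` (0-indexed version of `(x_1,…,x_n)`) is a valid n-tuple for the
input sequence `y`: `x_1 ≤ y n` and `x_{j+1} ≤ min (x_j) (y (n - j))` for `1 ≤ j ≤ n-1`. -/
def IsValid (y : ℕ → ℕ) (n : ℕ) (x : Fin n → ℕ) : Prop :=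
  (∀ h : 0 < n, x ⟨0, h⟩ ≤ y n) ∧
  ∀ i : ℕ, ∀ h : i + 1 < n,
    x ⟨i + 1, h⟩ ≤ min (x ⟨i, Nat.lt_of_succ_lt h⟩) (y (n - (i + 1)))

/-- `A y n k` : number of valid n-tuples whose first entry equals `k`. -/
noncomputable def A (y : ℕ → ℕ) (n k : ℕ) : ℕ :=
  Nat.card {x : Fin n → ℕ // IsValid y n x ∧ ∀ h : 0 < n, x ⟨0, h⟩ = k}

/-- `W y n` : total number of valid n-tuples. -/
noncomputable def W (y : ℕ → ℕ) (n : ℕ) : ℕ :=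
  Nat.card {x : Fin n → ℕ // IsValid y n x}



def T : ℕ → ℕ → ℕ
  | 0, _ => 1
  | _+1, 0 => 1
  | n+1, k+1 => T (n+1) k + T n (min (k+1) n)

lemma T_zero (k : ℕ) : T 0 k = 1 := by cases k <;> simp [T]
lemma T_zero' (n : ℕ) : T n 0 = 1 := by cases n <;> simp [T]
lemma T_succ (n k : ℕ) : T (n+1) (k+1) = T (n+1) k + T n (min (k+1) n) := by simp [T]

lemma T_formula : ∀ n, ∀ k, k ≤ n → (n+2) * T n k = (n+2-k) * (n+1+k).choose k := by
  intro n
  induction n with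
  | zero => intro k hk; interval_cases k; simp [T_zero]
  | succ n ihn =>
    intro k hk
    induction k with
    | zero => simp [T_zero']
    | succ k ihk =>
      have IH1 : (n+3) * T (n+1) k = (n+3-k) * (n+2+k).choose k := by
        have := ihk (by omega)
        rw [show n+1+2 = n+3 by omega, show n+1+1+k = n+2+k by omega,
          show n+1+2-k = n+3-k by omega] at this
        exact this
      apply Nat.eq_of_mul_eq_mul_left (show 0 < n+2 by omega)
      rw [T_succ, show n+1+2 = n+3 by omega, show n+1+1+(k+1) = n+3+k by omega,
        show n+1+2-(k+1) = n+2-k by omega]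
      rcases Nat.lt_or_ge (k+1) (n+1) with hlt | hge
      · -- case A : k+1 ≤ n
        have hkn : k + 1 ≤ n := by omega
        rw [min_eq_left hkn]
        have IH2 : (n+2) * T n (k+1) = (n+1-k) * (n+2+k).choose (k+1) := by
          have := ihn (k+1) hkn
          rw [show n+1+(k+1) = n+2+k by omega, show n+2-(k+1) = n+1-k by omega] at this
          exact this
        have pascal : (n+3+k).choose (k+1) = (n+2+k).choose k + (n+2+k).choose (k+1) := by
          rw [show n+3+k = (n+2+k)+1 by ring]
          exact Nat.choose_succ_succ _ _
        have rel : (n+2+k).choose (k+1) * (k+1) = (n+2+k).choose k * (n+2) := by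
          rw [Nat.choose_succ_right_eq]; congr 1; omega
        rw [pascal]
        zify [show k ≤ n+3 by omega, show k ≤ n+1 by omega, show k ≤ n+2 by omega] at *
        linear_combination ((n:ℤ)+2)*IH1 + ((n:ℤ)+3)*IH2 - rel
      · -- case B : k = n
        obtain rfl : n = k := by omega
        have IH2 : (n+2) * T n n = 2 * (2*n+1).choose n := by
          have := ihn n le_rfl
          rw [show n+1+n = 2*n+1 by omega, show n+2-n = 2 by omega] at this
          exact this
        have pascal : (n+3+n).choose (n+1) = (2*n+2).choose n + (2*n+2).choose (n+1) := by
          rw [show n+3+n = (2*n+2)+1 by ring]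
          exact Nat.choose_succ_succ _ _
        have rel : (2*n+2).choose (n+1) * (n+1) = (2*n+2).choose n * (n+2) := by
          rw [Nat.choose_succ_right_eq]; congr 1; omega
        have symm : (2*n+2).choose (n+1) = 2 * (2*n+1).choose n := by
          rw [show 2*n+2 = (2*n+1)+1 by ring, Nat.choose_succ_succ]
          have : (2*n+1).choose (n+1) = (2*n+1).choose n := by
            rw [← Nat.choose_symm (show n+1 ≤ 2*n+1 by omega)]
            congr 1; omega
          simp only [Nat.choose_succ_succ, Nat.succ_eq_add_one] at *
          omega
        rw [min_eq_right (by omega), show n+2-n = 2 by omega, pascal]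
        have IH1' : (n+3) * T (n+1) n = 3 * (2*n+2).choose n := by
          rw [IH1, show n+3-n = 3 by omega, show n+2+n = 2*n+2 by omega]
        zify at *
        linear_combination ((n:ℤ)+2)*IH1' + ((n:ℤ)+3)*IH2 - rel - ((n:ℤ)+3)*symm

def VP (n k : ℕ) (x : Fin n → ℕ) : Prop :=
  IsValid (fun m => m) n x ∧ ∀ h : 0 < n, x ⟨0, h⟩ ≤ k

lemma cons_mk_zero (a : ℕ) {n : ℕ} (t : Fin n → ℕ) (h : 0 < n+1) :
    (Fin.cons a t : Fin (n+1) → ℕ) ⟨0, h⟩ = a := rfl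

lemma cons_mk_succ (a : ℕ) {n : ℕ} (t : Fin n → ℕ) (i : ℕ) (h : i+1 < n+1) :
    (Fin.cons a t : Fin (n+1) → ℕ) ⟨i+1, h⟩ = t ⟨i, Nat.lt_of_succ_lt_succ h⟩ := by
  have e : (⟨i+1, h⟩ : Fin (n+1)) = Fin.succ ⟨i, Nat.lt_of_succ_lt_succ h⟩ := rfl
  rw [e, Fin.cons_succ]

lemma tail_mk {n : ℕ} (x : Fin (n+1) → ℕ) (i : ℕ) (h : i < n) :
    Fin.tail x ⟨i, h⟩ = x ⟨i+1, Nat.succ_lt_succ h⟩ := rfl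

lemma valid_bound {n : ℕ} {x : Fin n → ℕ} (hx : IsValid (fun m => m) n x) :
    ∀ i : Fin n, x i ≤ n := by
  rintro ⟨i, hi⟩
  induction i with
  | zero => exact hx.1 hi
  | succ j ihj =>
    have h2 := hx.2 j hi
    exact le_trans (le_trans h2 (min_le_left _ _)) (ihj (Nat.lt_of_succ_lt hi))

lemma finite_sub {n : ℕ} {p : (Fin n → ℕ) → Prop} (hp : ∀ x, p x → ∀ i, x i ≤ n) :
    Finite {x : Fin n → ℕ // p x} := by
  apply Finite.of_injective
    (fun x => (fun i => (⟨x.1 i, Nat.lt_succ_of_le (hp x.1 x.2 i)⟩ : Fin (n+1))))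
  intro a b h
  apply Subtype.ext
  funext i
  exact congrArg Fin.val (congrFun h i)

instance VPfinite (n k : ℕ) : Finite {x : Fin n → ℕ // VP n k x} :=
  finite_sub (fun x hx => valid_bound hx.1)

lemma tail_valid {n : ℕ} {x : Fin (n+1) → ℕ} (hx : IsValid (fun m => m) (n+1) x) :
    IsValid (fun m => m) n (Fin.tail x) := by
  constructor
  · intro h
    rw [tail_mk]
    have := hx.2 0 (Nat.succ_lt_succ h)
    simp only at this ⊢
    calc x ⟨0+1, _⟩ ≤ min (x ⟨0, _⟩) (n+1-(0+1)) := this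
    _ ≤ n+1-(0+1) := min_le_right _ _
    _ ≤ n := by omega
  · intro i h
    rw [tail_mk, tail_mk]
    have := hx.2 (i+1) (Nat.succ_lt_succ h)
    simp only at this ⊢
    have e : n+1-(i+1+1) = n-(i+1) := by omega
    rw [e] at this
    exact this

lemma tail_head {n : ℕ} {x : Fin (n+1) → ℕ} (hx : IsValid (fun m => m) (n+1) x)
    {k : ℕ} (h0 : x ⟨0, Nat.succ_pos n⟩ = k+1) :
    ∀ h : 0 < n, Fin.tail x ⟨0, h⟩ ≤ min (k+1) n := by
  intro h
  rw [tail_mk]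
  have := hx.2 0 (Nat.succ_lt_succ h)
  simp only at this
  rw [show (⟨0, Nat.lt_of_succ_lt (Nat.succ_lt_succ h)⟩ : Fin (n+1)) = ⟨0, Nat.succ_pos n⟩ from rfl, h0] at this
  calc x ⟨0+1, _⟩ ≤ min (k+1) (n+1-(0+1)) := this
  _ ≤ min (k+1) n := by omega

lemma cons_valid {n k : ℕ} (hk : k ≤ n) {t : Fin n → ℕ}
    (ht : IsValid (fun m => m) n t) (ht0 : ∀ h : 0 < n, t ⟨0, h⟩ ≤ min (k+1) n) :
    IsValid (fun m => m) (n+1) (Fin.cons (k+1) t) := by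
  constructor
  · intro h
    rw [cons_mk_zero]
    simp only
    omega
  · intro i h
    match i with
    | 0 =>
      rw [cons_mk_succ, cons_mk_zero]
      have hn : 0 < n := by omega
      have := ht0 hn
      simp only
      calc t ⟨0, _⟩ ≤ min (k+1) n := ht0 hn
      _ ≤ min (k+1) (n+1-(0+1)) := by omega
    | j+1 =>
      rw [cons_mk_succ, cons_mk_succ]
      have := ht.2 j (Nat.lt_of_succ_lt_succ h)
      simp only at this ⊢
      have e : n+1-(j+1+1) = n-(j+1) := by omega
      rw [e]
      exact this

noncomputable def splitEquiv (n k : ℕ) (hk : k ≤ n) :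
    {x : Fin (n+1) → ℕ // VP (n+1) (k+1) x} ≃
      {x : Fin (n+1) → ℕ // VP (n+1) k x} ⊕ {t : Fin n → ℕ // VP n (min (k+1) n) t} where
  toFun x :=
    if h : x.1 ⟨0, Nat.succ_pos n⟩ ≤ k then
      Sum.inl ⟨x.1, x.2.1, fun _ => h⟩
    else
      Sum.inr ⟨Fin.tail x.1, tail_valid x.2.1,
        tail_head x.2.1 (by have := x.2.2 (Nat.succ_pos n); omega)⟩
  invFun y :=
    match y with
    | Sum.inl x => ⟨x.1, x.2.1, fun h => le_trans (x.2.2 h) (Nat.le_succ k)⟩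
    | Sum.inr t => ⟨Fin.cons (k+1) t.1, cons_valid hk t.2.1 t.2.2,
        fun h => by rw [cons_mk_zero]⟩
  left_inv x := by
    by_cases h : x.1 ⟨0, Nat.succ_pos n⟩ ≤ k
    · simp only [dif_pos h]
    · simp only [dif_neg h]
      apply Subtype.ext
      have h0 : x.1 ⟨0, Nat.succ_pos n⟩ = k+1 := by
        have := x.2.2 (Nat.succ_pos n); omega
      show Fin.cons (k+1) (Fin.tail x.1) = x.1
      have e : (⟨0, Nat.succ_pos n⟩ : Fin (n+1)) = 0 := rfl
      rw [e] at h0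
      conv_rhs => rw [← Fin.cons_self_tail x.1]
      rw [h0]
  right_inv y := by
    match y with
    | Sum.inl x =>
      simp only [dif_pos (x.2.2 (Nat.succ_pos n))]
    | Sum.inr t =>
      have hne : ¬ ((Fin.cons (k+1) t.1 : Fin (n+1) → ℕ) ⟨0, Nat.succ_pos n⟩ ≤ k) := by
        rw [cons_mk_zero]; omega
      simp only [dif_neg hne]
      exact congrArg Sum.inr (Subtype.ext (funext fun i => by show Fin.tail (Fin.cons (k+1) t.1 : Fin (n+1) → ℕ) i = t.1 i; rw [Fin.tail_cons]))


lemma VP0_eq {n : ℕ} {x : Fin n → ℕ} (hx : VP n 0 x) : ∀ i : Fin n, x i = 0 := by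
  rintro ⟨i, hi⟩
  induction i with
  | zero => have := hx.2 hi; omega
  | succ j ihj =>
    have h2 := hx.1.2 j hi
    have := ihj (Nat.lt_of_succ_lt hi)
    simp only [this] at h2
    omega

lemma card_V_zero_row (k : ℕ) : Nat.card {x : Fin 0 → ℕ // VP 0 k x} = 1 := by
  apply Nat.card_eq_one_iff_unique.mpr
  constructor
  · constructor
    intro a b
    apply Subtype.ext; funext i; exact i.elim0
  · exact ⟨fun i => i.elim0,
      ⟨fun h => absurd h (by omega), fun i h => absurd h (by omega)⟩,
      fun h => absurd h (by omega)⟩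

lemma card_V_zero_col (n : ℕ) : Nat.card {x : Fin n → ℕ // VP n 0 x} = 1 := by
  apply Nat.card_eq_one_iff_unique.mpr
  constructor
  · constructor
    intro a b
    apply Subtype.ext; funext i
    rw [VP0_eq a.2 i, VP0_eq b.2 i]
  · exact ⟨fun _ => 0,
      ⟨fun h => Nat.zero_le _, fun i h => Nat.zero_le _⟩,
      fun h => Nat.le_refl 0⟩

lemma card_V : ∀ n k, k ≤ n → Nat.card {x : Fin n → ℕ // VP n k x} = T n k := by
  intro n
  induction n with
  | zero =>
    intro k hk
    rw [card_V_zero_row]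
    cases k <;> simp [T]
  | succ n ihn =>
    intro k hk
    induction k with
    | zero => rw [card_V_zero_col]; cases n <;> simp [T]
    | succ k ihk =>
      rw [Nat.card_congr (splitEquiv n k (by omega)), Nat.card_sum,
        ihk (by omega), ihn (min (k+1) n) (min_le_right _ _)]
      simp [T]

lemma central_succ (n : ℕ) : (2*n+2).choose (n+1) = 2 * (2*n+1).choose n := by
  rw [show 2*n+2 = (2*n+1)+1 by ring, Nat.choose_succ_succ]
  have h : (2*n+1).choose (n+1) = (2*n+1).choose n := by
    rw [← Nat.choose_symm (show n+1 ≤ 2*n+1 by omega)]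
    congr 1; omega
  simp only [Nat.choose_succ_succ, Nat.succ_eq_add_one] at *
  omega

lemma W_eq_T (n : ℕ) : W (fun m => m) n = T n n := by
  rw [W, Nat.card_congr (Equiv.subtypeEquivRight (q := VP n n)
    (fun x => ⟨fun hx => ⟨hx, fun h => hx.1 h⟩, fun hx => hx.1⟩))]
  exact card_V n n le_rfl

lemma key (n : ℕ) : (n+2) * W (fun m => m) n = (2*n+2).choose (n+1) := by
  rw [W_eq_T, central_succ]
  have := T_formula n n le_rfl
  rw [show n+2-n = 2 by omega, show n+1+n = 2*n+1 by omega] at this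
  exact this

theorem stmt12 (n : ℕ) (hn : 1 ≤ n) :
    W (fun m => m) n = catalan (n + 1) ∧
      (n + 2) * W (fun m => m) n = (2 * n + 2).choose (n + 1) := by
  have h3 : (n+2) * catalan (n+1) = (2*n+2).choose (n+1) := by
    have := succ_mul_catalan_eq_centralBinom (n+1)
    rw [Nat.centralBinom, show 2*(n+1) = 2*n+2 by ring] at this
    exact this
  constructor
  · exact Nat.eq_of_mul_eq_mul_left (show 0 < n+2 by omega) ((key n).trans h3.symm)
  · exact key n
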